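/- arXiv:1004.3416 — 2 statements merged into one kernel-verified Lean document; each statement's English description precedes it below -/
import Mathlib

section
/- Let {A_v}_{v∈V} be a non-empty finite collection of events in a probability space, where the index set V is the vertex set of a chordal graph G. Then Pr(⋃_{v∈V} A_v) ≥ (1/α(G)) · Σ_{I∈𝒞(G)} (−1)^{|I|−1} · Pr(⋂_{i∈I} A_i), where α(G) is the independence number of G and the sum runs over all elements I of the clique complex 𝒞(G). -/
open MeasureTheory Finset
open scoped Classical

/-- A graph is chordal if it contains no induced cycle of length four or greater. -/
def SimpleGraph.IsChordal {V : Type*} (G : SimpleGraph V) : Prop :=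
  ∀ n : ℕ, 4 ≤ n → ∀ s : Set V, ¬ Nonempty (G.induce s ≃g SimpleGraph.cycleGraph n)

/-- The clique complex of `G`: the collection of all non-empty cliques of `G`. -/
noncomputable def SimpleGraph.cliqueComplex {V : Type*} [Fintype V] (G : SimpleGraph V) :
    Finset (Finset V) :=
  Finset.univ.powerset.filter fun I => I.Nonempty ∧ G.IsClique (I : Set V)

/-- The independence number of `G`: the maximum size of a set of pairwise
non-adjacent vertices. -/
noncomputable def SimpleGraph.indepNum' {V : Type*} [Fintype V] (G : SimpleGraph V) : ℕ :=
  sSup {n | ∃ s : Finset V, ((s : Set V).Pairwise fun v w => ¬ G.Adj v w) ∧ s.card = n}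

/-!
Write `T ω = {v | ω ∈ A v}` and let `χ T` be the sum of `(-1) ^ (#I - 1)` over the nonempty
cliques `I ⊆ T`, the Euler characteristic of the clique complex of `G[T]`. Writing each
probability as the integral of an indicator, the sieve sum is `𝔼[χ (T ω)]`; since `χ ∅ = 0` it
suffices that `χ T ≤ α(G)` for every `T`. Deleting a vertex `v` gives
`χ T = χ (T - v) + 1 - χ (N_T v)`, and if `v` is simplicial its neighbourhood is a clique, so
`χ (N_T v) = 1` unless `v` is isolated in `G[T]`. Peeling off simplicial vertices therefore
produces an independent `W ⊆ T` with `χ T ≤ #W`.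

Simplicial vertices exist by Dirac's argument, run outside a given clique `K ⊊ T`: take `v ∈ T`
non-universal and adjacent to all of `K`, and a component `C` of `T \ N[v]`. Every vertex of
`T \ C` adjacent to `C` is a neighbour of `v`, and two non-adjacent such vertices, joined by a
shortest path through `C` and by `v`, would span an induced cycle of length at least four. So they
form a clique `S`, and induction on `C ∪ S ⊊ T` with the clique `S` yields a simplicial vertex
in `C`.
-/

namespace SimpleGraph

variable {V : Type*} {G : SimpleGraph V}

namespace Walk

variable {u v : V} {p : G.Walk u v}

lemma dist_getVert_of_length_eq_dist (hp : p.length = G.dist u v) {i : ℕ} (hi : i ≤ p.length) :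
    G.dist u (p.getVert i) = i := by
  rw [← length_eq_dist_of_subwalk hp (p.isSubwalk_take i), take_length, min_eq_left hi]

lemma eq_of_getVert_eq_of_length_eq_dist (hp : p.length = G.dist u v) {i j : ℕ}
    (hi : i ≤ p.length) (hj : j ≤ p.length) (h : p.getVert i = p.getVert j) : i = j := by
  rw [← dist_getVert_of_length_eq_dist hp hi, h, dist_getVert_of_length_eq_dist hp hj]

lemma adj_getVert_iff_of_length_eq_dist (hp : p.length = G.dist u v) {i j : ℕ}
    (hi : i ≤ p.length) (hj : j ≤ p.length) :
    G.Adj (p.getVert i) (p.getVert j) ↔ i = j + 1 ∨ j = i + 1 := by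
  constructor
  · intro hadj
    have := hadj.diff_dist_adj (u := u)
    rw [dist_getVert_of_length_eq_dist hp hi, dist_getVert_of_length_eq_dist hp hj] at this
    have hne : i ≠ j := fun h => hadj.ne (by rw [h])
    omega
  · rintro (rfl | rfl)
    · exact (p.adj_getVert_succ (by omega)).symm
    · exact p.adj_getVert_succ (by omega)

end Walk

lemma cycleGraph_adj_iff_val {d : ℕ} {a b : Fin (d + 2)} :
    (cycleGraph (d + 2)).Adj a b ↔
      a.val = b.val + 1 ∨ b.val = a.val + 1 ∨ (a.val = 0 ∧ b.val = d + 1) ∨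
        (a.val = d + 1 ∧ b.val = 0) := by
  have := a.isLt
  have := b.isLt
  rw [cycleGraph_adj']
  rcases lt_trichotomy a b with h | rfl | h
  · rw [Fin.coe_sub_iff_lt.2 h, Fin.sub_val_of_le h.le]
    rw [Fin.lt_def] at h
    omega
  · simp only [sub_self, Fin.val_zero]
    omega
  · rw [Fin.coe_sub_iff_lt.2 h, Fin.sub_val_of_le h.le]
    rw [Fin.lt_def] at h
    omega

lemma nonempty_cycleGraph_embedding {d : ℕ} (g : ℕ → V) (w : V)
    (hg : ∀ i ≤ d, ∀ j ≤ d, g i = g j → i = j)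
    (hgadj : ∀ i ≤ d, ∀ j ≤ d, (G.Adj (g i) (g j) ↔ i = j + 1 ∨ j = i + 1))
    (hw : ∀ i ≤ d, g i ≠ w) (hwadj : ∀ i ≤ d, (G.Adj w (g i) ↔ i = 0 ∨ i = d)) :
    Nonempty (cycleGraph (d + 2) ↪g G) := by
  let f : Fin (d + 2) → V := fun a => if a.val ≤ d then g a else w
  have hinj : Function.Injective f := by
    intro a b hab
    have := a.isLt
    have := b.isLt
    simp only [f] at hab
    split_ifs at hab with ha hb hb
    · exact Fin.ext (hg _ ha _ hb hab)
    · exact absurd hab (hw _ ha)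
    · exact absurd hab.symm (hw _ hb)
    · exact Fin.ext (by omega)
  refine ⟨⟨⟨f, hinj⟩, fun {a b} => ?_⟩⟩
  have := a.isLt
  have := b.isLt
  simp only [Function.Embedding.coeFn_mk, f, cycleGraph_adj_iff_val]
  split_ifs with ha hb hb
  · rw [hgadj _ ha _ hb]; omega
  · rw [adj_comm, hwadj _ ha]; omega
  · rw [hwadj _ hb]; omega
  · simp only [SimpleGraph.irrefl, false_iff]; omega

lemma IsChordal.not_nonempty_cycleGraph_embedding (hG : G.IsChordal) {n : ℕ} (hn : 4 ≤ n) :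
    ¬ Nonempty (cycleGraph n ↪g G) :=
  fun ⟨f⟩ => hG n hn _ ⟨f.isoInduceRange.symm⟩

/-- A shortest such path, closed up through `v`, would be an induced cycle of length `≥ 4`. -/
lemma IsChordal.not_reachable_induce (hG : G.IsChordal) {s : Set V} {v x y : V} (hx : x ∈ s)
    (hy : y ∈ s) (hvx : G.Adj v x) (hvy : G.Adj v y) (hxy : x ≠ y) (hnxy : ¬ G.Adj x y)
    (hs : ∀ u ∈ s, u ≠ x → u ≠ y → u ≠ v ∧ ¬ G.Adj v u) :
    ¬ (G.induce s).Reachable ⟨x, hx⟩ ⟨y, hy⟩ := by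
  intro hreach
  obtain ⟨p, hp⟩ := hreach.exists_walk_length_eq_dist
  have hlen : 1 < p.length :=
    hp ▸ hreach.one_lt_dist_of_ne_of_not_adj (fun h => hxy (congrArg Subtype.val h)) hnxy
  have hinterior : ∀ i, 0 < i → i < p.length →
      (p.getVert i : V) ≠ v ∧ ¬ G.Adj v (p.getVert i) := by
    intro i hi0 hilen
    refine hs _ (p.getVert i).prop (fun h => ?_) (fun h => ?_)
    · have := p.eq_of_getVert_eq_of_length_eq_dist hp hilen.le (Nat.zero_le _)
        (Subtype.ext (h.trans (congrArg Subtype.val p.getVert_zero).symm))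
      omega
    · have := p.eq_of_getVert_eq_of_length_eq_dist hp hilen.le le_rfl
        (Subtype.ext (h.trans (congrArg Subtype.val p.getVert_length).symm))
      omega
  refine hG.not_nonempty_cycleGraph_embedding (n := p.length + 2) (by omega) <|
    nonempty_cycleGraph_embedding (fun i => (p.getVert i : V)) v
      (fun i hi j hj h => p.eq_of_getVert_eq_of_length_eq_dist hp hi hj (Subtype.ext h))
      (fun i hi j hj => p.adj_getVert_iff_of_length_eq_dist hp hi hj) (fun i hi => ?_)
      (fun i hi => ?_)
  all_goals obtain rfl | rfl | hi' : i = 0 ∨ i = p.length ∨ (0 < i ∧ i < p.length) := by omega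
  · simpa using hvx.ne.symm
  · simpa using hvy.ne.symm
  · exact (hinterior i hi'.1 hi'.2).1
  · simpa using hvx
  · simpa using hvy
  · simp only [(hinterior i hi'.1 hi'.2).2, false_iff]
    omega

lemma IsChordal.isClique_of_preconnected (hG : G.IsChordal) {v : V} {C : Set V}
    (hC : (G.induce C).Preconnected) (hvC : ∀ c ∈ C, c ≠ v ∧ ¬ G.Adj v c) :
    G.IsClique {x | G.Adj v x ∧ ∃ c ∈ C, G.Adj x c} := by
  rintro x ⟨hvx, cx, hcx, hxcx⟩ y ⟨hvy, cy, hcy, hycy⟩ hxy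
  by_contra hnxy
  let s : Set V := insert x (insert y C)
  have hCs : C ⊆ s := fun c hc => .inr (.inr hc)
  have hx : x ∈ s := .inl rfl
  have hy : y ∈ s := .inr (.inl rfl)
  refine hG.not_reachable_induce hx hy hvx hvy hxy hnxy
    (fun u hu hux huy => hvC u (by simpa [s, hux, huy] using hu)) ?_
  exact (show (G.induce s).Adj ⟨x, hx⟩ ⟨cx, hCs hcx⟩ from hxcx).reachable.trans <|
    ((hC ⟨cx, hcx⟩ ⟨cy, hcy⟩).map (G.induceHomOfLE hCs).toHom).trans <|
      (show (G.induce s).Adj ⟨cy, hCs hcy⟩ ⟨y, hy⟩ from hycy.symm).reachable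

lemma exists_connected_closed_subset (X : Finset V) (hX : X.Nonempty) :
    ∃ C ⊆ X, C.Nonempty ∧ (G.induce (C : Set V)).Preconnected ∧
      ∀ c ∈ C, ∀ u ∈ X, G.Adj c u → u ∈ C := by
  obtain ⟨u₀, hu₀⟩ := hX
  have hfam : {u₀} ∈ X.powerset.filter fun C : Finset V => (G.induce (C : Set V)).Connected := by
    simp only [mem_filter, mem_powerset, singleton_subset_iff, hu₀, true_and]
    rw [coe_singleton, induce_singleton_eq_top]
    exact connected_top
  obtain ⟨C, hC, hmax⟩ := exists_max_image _ card ⟨_, hfam⟩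
  rw [mem_filter, mem_powerset] at hC
  refine ⟨C, hC.1, coe_nonempty.1 (Set.nonempty_coe_sort.1 hC.2.nonempty), hC.2.preconnected,
    fun c hc u hu hcu => ?_⟩
  by_contra huC
  have hconn : (G.induce (insert u C : Finset V)).Connected := by
    rw [coe_insert, Set.insert_eq, Set.union_comm]
    exact connected_induce_union hC.2.preconnected
      .of_subsingleton hc rfl hcu
  have := hmax (insert u C) (mem_filter.2 ⟨mem_powerset.2 (insert_subset hu hC.1), hconn⟩)
  rw [card_insert_of_notMem huC] at this
  omega

def IsSimplicial (G : SimpleGraph V) (T : Finset V) (v : V) : Prop :=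
  G.IsClique (↑{u ∈ T | G.Adj v u} : Set V)

lemma exists_nonuniversal_adj_clique {T K : Finset V} (hT : ¬ G.IsClique (T : Set V))
    (hK : G.IsClique (K : Set V)) (hKT : K ⊆ T) :
    ∃ v ∈ T, (∃ u ∈ T, u ≠ v ∧ ¬ G.Adj v u) ∧ ∀ k ∈ K, k ≠ v → G.Adj v k := by
  by_cases hKuniv : ∃ k ∈ K, ∃ u ∈ T, u ≠ k ∧ ¬ G.Adj k u
  · obtain ⟨k, hk, hnonuniv⟩ := hKuniv
    exact ⟨k, hKT hk, hnonuniv, fun k' hk' hne => hK hk hk' hne.symm⟩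
  · push Not at hKuniv
    obtain ⟨a, ha, b, hb, hab, hnab⟩ : ∃ a ∈ T, ∃ b ∈ T, a ≠ b ∧ ¬ G.Adj a b := by
      simpa [IsClique, Set.Pairwise] using hT
    exact ⟨a, ha, ⟨b, hb, hab.symm, hnab⟩, fun k hk hka => (hKuniv k hk a ha hka.symm).symm⟩

theorem IsChordal.exists_isClique_frontier (hG : G.IsChordal) {T : Finset V} {v : V}
    (hv : ∃ u ∈ T, u ≠ v ∧ ¬ G.Adj v u) :
    ∃ C ⊆ T, C.Nonempty ∧ (∀ c ∈ C, c ≠ v ∧ ¬ G.Adj v c) ∧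
      G.IsClique (↑{x ∈ T \ C | ∃ c ∈ C, G.Adj x c} : Set V) := by
  obtain ⟨u₀, hu₀⟩ := hv
  obtain ⟨C, hCX, hCne, hCconn, hCclosed⟩ :=
    exists_connected_closed_subset (G := G) {u ∈ T | u ≠ v ∧ ¬ G.Adj v u} ⟨u₀, by simpa using hu₀⟩
  have hvC : ∀ c ∈ C, c ≠ v ∧ ¬ G.Adj v c := fun c hc => (mem_filter.1 (hCX hc)).2
  refine ⟨C, hCX.trans (filter_subset _ T), hCne, hvC,
    (hG.isClique_of_preconnected hCconn hvC).subset fun x hx => ?_⟩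
  simp only [coe_filter, mem_sdiff, Set.mem_ofPred_eq] at hx
  obtain ⟨⟨hxT, hxC⟩, c, hc, hxc⟩ := hx
  refine ⟨?_, c, hc, hxc⟩
  -- otherwise `x` would lie in the same component of `T \ N[v]` as `c`
  by_contra hvx
  have hxv : x ≠ v := by rintro rfl; exact (hvC c hc).2 hxc
  exact hxC (hCclosed c hc x (mem_filter.2 ⟨hxT, hxv, hvx⟩) hxc.symm)

theorem IsChordal.exists_isSimplicial_mem_sdiff (hG : G.IsChordal) (T K : Finset V)
    (hK : G.IsClique (K : Set V)) (hKT : K ⊆ T) (hTK : (T \ K).Nonempty) :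
    ∃ w ∈ T \ K, G.IsSimplicial T w := by
  induction T using Finset.strongInduction generalizing K with
  | H T ih =>
  by_cases hT : G.IsClique (T : Set V)
  · obtain ⟨w, hw⟩ := hTK
    exact ⟨w, hw, hT.subset (coe_subset.2 (filter_subset _ _))⟩
  obtain ⟨v, hvT, hv, hvK⟩ := exists_nonuniversal_adj_clique hT hK hKT
  obtain ⟨C, hCT, ⟨c₀, hc₀⟩, hvC, hS⟩ := hG.exists_isClique_frontier hv
  set S : Finset V := {x ∈ T \ C | ∃ c ∈ C, G.Adj x c}
  have hCS : ∀ c ∈ C, c ∉ S := fun c hc hcS => (mem_sdiff.1 (mem_filter.1 hcS).1).2 hc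
  have hvCS : v ∉ C ∪ S := by
    simp only [mem_union, S, mem_filter, not_or]
    exact ⟨fun h => (hvC v h).1 rfl, fun ⟨_, c, hc, hvc⟩ => (hvC c hc).2 hvc⟩
  have hCST : C ∪ S ⊂ T :=
    (ssubset_iff_of_subset (union_subset hCT (filter_subset _ _ |>.trans sdiff_subset))).2
      ⟨v, hvT, hvCS⟩
  obtain ⟨w, hw, hwsimp⟩ := ih (C ∪ S) hCST S hS subset_union_right
    ⟨c₀, mem_sdiff.2 ⟨mem_union_left _ hc₀, hCS c₀ hc₀⟩⟩
  obtain ⟨hwCS, hwS⟩ := mem_sdiff.1 hw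
  have hwC : w ∈ C := (mem_union.1 hwCS).resolve_right hwS
  refine ⟨w, mem_sdiff.2 ⟨hCT hwC, fun hwK => (hvC w hwC).2 (hvK w hwK (hvC w hwC).1)⟩, ?_⟩
  refine hwsimp.subset fun u hu => ?_
  simp only [coe_filter, Set.mem_ofPred_eq] at hu ⊢
  refine ⟨?_, hu.2⟩
  by_cases huC : u ∈ C
  · exact mem_union_left _ huC
  · exact mem_union_right _ (mem_filter.2 ⟨mem_sdiff.2 ⟨hu.1, huC⟩, w, hwC, hu.2.symm⟩)

theorem IsChordal.exists_isSimplicial (hG : G.IsChordal) {T : Finset V} (hT : T.Nonempty) :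
    ∃ v ∈ T, G.IsSimplicial T v := by
  simpa using hG.exists_isSimplicial_mem_sdiff T ∅ (by simp) (empty_subset T) (by simpa using hT)

variable (G) in
noncomputable def cliqueEulerChar (T : Finset V) : ℤ :=
  ∑ I ∈ T.powerset.filter fun I : Finset V ↦ I.Nonempty ∧ G.IsClique (I : Set V), (-1) ^ (#I - 1)

lemma cliqueEulerChar_eq_one_sub (T : Finset V) :
    G.cliqueEulerChar T =
      1 - ∑ I ∈ T.powerset.filter fun I : Finset V ↦ G.IsClique (I : Set V), (-1) ^ #I := by
  rw [← sum_filter_add_sum_filter_not _ Finset.Nonempty, filter_filter, filter_filter]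
  have hempty : (T.powerset.filter fun I : Finset V ↦ G.IsClique (I : Set V) ∧ ¬ I.Nonempty) =
      {∅} := by
    ext I
    simp only [mem_filter, mem_powerset, not_nonempty_iff_eq_empty, mem_singleton]
    constructor
    · exact fun h => h.2.2
    · rintro rfl
      simp
  have hodd : ∀ I ∈ T.powerset.filter fun I : Finset V ↦ G.IsClique (I : Set V) ∧ I.Nonempty,
      (-1 : ℤ) ^ #I = -(-1) ^ (#I - 1) := by
    intro I hI
    rw [← Nat.sub_add_cancel (card_pos.2 (mem_filter.1 hI).2.2), pow_succ]
    simp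
  rw [hempty, sum_singleton, card_empty, pow_zero, cliqueEulerChar,
    filter_congr (fun I _ => and_comm), sum_congr rfl hodd, sum_neg_distrib]
  ring

lemma cliqueEulerChar_insert {v : V} {T : Finset V} (hv : v ∉ T) :
    G.cliqueEulerChar (insert v T) =
      G.cliqueEulerChar T + 1 - G.cliqueEulerChar {u ∈ T | G.Adj v u} := by
  set N : Finset V := {u ∈ T | G.Adj v u}
  -- the cliques through `v` are the `insert v I` with `I` a clique of the neighbourhood `N`
  have hcone : ∑ I ∈ T.powerset,
      (if G.IsClique (↑(insert v I) : Set V) then (-1 : ℤ) ^ #(insert v I) else 0) =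
      -∑ I ∈ N.powerset, if G.IsClique (I : Set V) then (-1) ^ #I else 0 := by
    rw [← sum_subset (powerset_mono.2 (filter_subset (G.Adj v) T)), ← sum_neg_distrib]
    · refine sum_congr rfl fun I hI => ?_
      have hIN := mem_powerset.1 hI
      have hvI : v ∉ I := fun h => hv (filter_subset (G.Adj v) T (hIN h))
      have hadj : ∀ u ∈ (I : Set V), v ≠ u → G.Adj v u := fun u hu _ => (mem_filter.1 (hIN hu)).2
      simp only [coe_insert, isClique_insert, and_iff_left hadj, card_insert_of_notMem hvI,
        pow_succ]
      split_ifs <;> simp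
    · intro I hIT hIN
      rw [if_neg]
      obtain ⟨u, huI, huN⟩ := not_subset.1 (mt mem_powerset.2 hIN)
      have huT := mem_powerset.1 hIT huI
      rw [coe_insert, isClique_insert]
      exact fun h => huN (mem_filter.2 ⟨huT, h.2 u huI (fun hvu => hv (hvu ▸ huT))⟩)
  simp only [cliqueEulerChar_eq_one_sub, sum_filter]
  rw [sum_powerset_insert hv, hcone]
  ring

lemma cliqueEulerChar_of_isClique {K : Finset V} (hK : G.IsClique (K : Set V))
    (hne : K.Nonempty) : G.cliqueEulerChar K = 1 := by
  rw [cliqueEulerChar_eq_one_sub,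
    filter_true_of_mem fun I hI => hK.subset (coe_subset.2 (mem_powerset.1 hI)),
    sum_powerset_neg_one_pow_card_of_nonempty hne, sub_zero]

@[simp]
lemma cliqueEulerChar_empty : G.cliqueEulerChar ∅ = 0 := by
  rw [cliqueEulerChar, powerset_empty, filter_singleton, if_neg (by simp), sum_empty]

theorem IsChordal.exists_isIndepSet_cliqueEulerChar_le (hG : G.IsChordal) (T : Finset V) :
    ∃ W ⊆ T, G.IsIndepSet (W : Set V) ∧ G.cliqueEulerChar T ≤ #W := by
  induction T using Finset.strongInduction with
  | H T ih =>
  rcases T.eq_empty_or_nonempty with rfl | hT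
  · exact ⟨∅, empty_subset _, by simp, by simp⟩
  obtain ⟨v, hvT, hv⟩ := hG.exists_isSimplicial hT
  obtain ⟨W, hWT, hW, hχW⟩ := ih (T.erase v) (erase_ssubset hvT)
  have hχ := G.cliqueEulerChar_insert (notMem_erase v T)
  rw [insert_erase hvT] at hχ
  rcases ({u ∈ T.erase v | G.Adj v u}).eq_empty_or_nonempty with hN | hN
  · have hvW : ∀ u ∈ W, ¬ G.Adj v u := fun u hu hvu =>
      (eq_empty_iff_forall_notMem.1 hN) u (mem_filter.2 ⟨hWT hu, hvu⟩)
    refine ⟨insert v W, insert_subset hvT (hWT.trans (erase_subset v T)), ?_, ?_⟩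
    · rw [coe_insert]
      exact hW.insert fun u hu _ => ⟨hvW u hu, fun huv => hvW u hu huv.symm⟩
    · rw [hχ, hN, cliqueEulerChar_empty,
        card_insert_of_notMem fun h => notMem_erase v T (hWT h)]
      push_cast
      omega
  · refine ⟨W, hWT.trans (erase_subset v T), hW, ?_⟩
    rw [hχ, cliqueEulerChar_of_isClique (hv.subset (coe_subset.2 (filter_subset_filter _
      (erase_subset v T)))) hN]
    omega

lemma IsIndepSet.card_le_indepNum' [Fintype V] {W : Finset V} (hW : G.IsIndepSet (W : Set V)) :
    #W ≤ G.indepNum' :=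
  le_csSup ⟨Fintype.card V, by rintro n ⟨s, -, rfl⟩; exact card_le_univ s⟩ ⟨W, hW, rfl⟩

theorem IsChordal.cliqueEulerChar_le_indepNum' [Fintype V] (hG : G.IsChordal) (T : Finset V) :
    G.cliqueEulerChar T ≤ G.indepNum' := by
  obtain ⟨W, -, hW, hχW⟩ := hG.exists_isIndepSet_cliqueEulerChar_le T
  exact hχW.trans (by exact_mod_cast hW.card_le_indepNum')

lemma sum_cliqueComplex_filter_subset [Fintype V] (T : Finset V) :
    ∑ I ∈ G.cliqueComplex with I ⊆ T, (-1 : ℤ) ^ (#I - 1) = G.cliqueEulerChar T := by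
  rw [cliqueComplex, cliqueEulerChar, filter_filter]
  congr 1
  ext I
  simp only [mem_filter, mem_powerset, subset_univ, true_and]
  tauto

end SimpleGraph

theorem sum_mul_measureReal_biInter_le {ι Ω : Type*} [Fintype ι] [MeasurableSpace Ω]
    (μ : Measure Ω) [IsFiniteMeasure μ] {A : ι → Set Ω} (hA : ∀ i, MeasurableSet (A i))
    {𝓘 : Finset (Finset ι)} (h𝓘 : ∀ I ∈ 𝓘, I.Nonempty) (c : Finset ι → ℝ) {a : ℝ}
    (hc : ∀ ω, ∑ I ∈ 𝓘 with I ⊆ ({i | ω ∈ A i} : Finset ι), c I ≤ a) :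
    ∑ I ∈ 𝓘, c I * μ.real (⋂ i ∈ I, A i) ≤ a * μ.real (⋃ i, A i) := by
  have hmeas (I : Finset ι) : MeasurableSet (⋂ i ∈ I, A i) :=
    I.measurableSet_biInter fun i _ => hA i
  have hint (I : Finset ι) : Integrable (fun ω => c I * (⋂ i ∈ I, A i).indicator 1 ω) μ :=
    ((integrable_const (1 : ℝ)).indicator (hmeas I)).const_mul (c I)
  have hpoint (ω : Ω) :
      ∑ I ∈ 𝓘, c I * (⋂ i ∈ I, A i).indicator 1 ω ≤ a * (⋃ i, A i).indicator 1 ω := by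
    have hsum : ∑ I ∈ 𝓘, c I * (⋂ i ∈ I, A i).indicator 1 ω =
        ∑ I ∈ 𝓘 with I ⊆ ({i | ω ∈ A i} : Finset ι), c I := by
      rw [sum_filter]
      refine sum_congr rfl fun I _ => ?_
      simp [Set.indicator_apply, subset_iff]
    rw [hsum]
    by_cases hω : ω ∈ ⋃ i, A i
    · simpa [hω] using hc ω
    · rw [Set.indicator_of_notMem hω, mul_zero]
      refine (sum_eq_zero fun I hI => absurd ?_ hω).le
      obtain ⟨i, hi⟩ := h𝓘 I (mem_filter.1 hI).1
      exact Set.mem_iUnion.2 ⟨i, by simpa using (mem_filter.1 hI).2 hi⟩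
  calc ∑ I ∈ 𝓘, c I * μ.real (⋂ i ∈ I, A i)
      = ∫ ω, ∑ I ∈ 𝓘, c I * (⋂ i ∈ I, A i).indicator 1 ω ∂μ := by
        rw [integral_finsetSum _ fun I _ => hint I]
        simp_rw [integral_const_mul, integral_indicator_one (hmeas _)]
    _ ≤ ∫ ω, a * (⋃ i, A i).indicator 1 ω ∂μ :=
        integral_mono (integrable_finsetSum _ fun I _ => hint I)
          (((integrable_const (1 : ℝ)).indicator (MeasurableSet.iUnion hA)).const_mul a) hpoint
    _ = a * μ.real (⋃ i, A i) := by
        rw [integral_const_mul, integral_indicator_one (MeasurableSet.iUnion hA)]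

theorem chordal_graph_sieve_lower_general {Ω V : Type*} [MeasurableSpace Ω] [Fintype V]
    (μ : Measure Ω) [IsProbabilityMeasure μ] (G : SimpleGraph V) (hG : G.IsChordal)
    (A : V → Set Ω) (hA : ∀ v, MeasurableSet (A v)) :
    (μ (⋃ v, A v)).toReal ≥
      (1 / G.indepNum') *
        ∑ I ∈ G.cliqueComplex, (-1 : ℝ) ^ (I.card - 1) * (μ (⋂ i ∈ I, A i)).toReal := by
  rw [ge_iff_le, one_div]
  refine inv_mul_le_of_le_mul₀ (Nat.cast_nonneg _) measureReal_nonneg <|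
    sum_mul_measureReal_biInter_le μ hA (fun I hI => (mem_filter.1 hI).2.1) _ fun ω => ?_
  have := hG.cliqueEulerChar_le_indepNum' {v | ω ∈ A v}
  rw [← G.sum_cliqueComplex_filter_subset] at this
  exact_mod_cast this

theorem chordal_graph_sieve_lower {Ω V : Type*} [MeasurableSpace Ω] [Fintype V] [Nonempty V]
    (μ : Measure Ω) [IsProbabilityMeasure μ] (G : SimpleGraph V) (hG : G.IsChordal)
    (A : V → Set Ω) (hA : ∀ v, MeasurableSet (A v)) :
    (μ (⋃ v, A v)).toReal ≥
      (1 / G.indepNum') *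
        ∑ I ∈ G.cliqueComplex, (-1 : ℝ) ^ (I.card - 1) * (μ (⋂ i ∈ I, A i)).toReal :=
  chordal_graph_sieve_lower_general μ G hG A hA
end

section
/- Let {A_v}_{v∈V} be a non-empty finite collection of events in a probability space, where the index set V is the vertex set of a chordal graph G. Then for every positive integer r, Pr(⋃_{v∈V} A_v) ≥ (1/α(G)) · Σ_{I∈𝒞(G), |I|≤2r} (−1)^{|I|−1} · Pr(⋂_{i∈I} A_i), where α(G) is the independence number of G and the sum runs over all elements I of the clique complex 𝒞(G) of cardinality at most 2r. -/
open MeasureTheory Finset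
open scoped Classical

/-- The independence number of `G`: the maximum size of a set of pairwise
non-adjacent vertices. -/
noncomputable def SimpleGraph.indepNumber {V : Type*} [Fintype V] (G : SimpleGraph V) : ℕ :=
  sSup {n | ∃ s : Finset V, ((s : Set V).Pairwise fun v w => ¬ G.Adj v w) ∧ s.card = n}

/-!
In a chordal graph every nonempty vertex set `S` contains a vertex whose neighbourhood in `S`
is a clique (Dirac). Indeed, a minimum separator `T` of two non-adjacent vertices `a, b` is a
clique: two non-adjacent vertices of `T` could be joined by induced paths through the component
of `a` and through that of `b`, closing an induced cycle of length at least four; induction on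
the component side plus `T` then yields a simplicial vertex on each side.

Fix `ω` and let `S` be the set of `v` with `ω ∈ A v`. For a simplicial vertex `v` of `S`, the
cliques through `v` are `insert v J` with `J` in the neighbourhood `N` of `v` in `S`, and they
contribute `∑_{|J| < 2r} (-1)^|J|`, which is `1` if `N = ∅` and `≤ 0` otherwise (an even partial
sum of alternating binomial coefficients). By induction the truncated clique sum over `S` is at
most the size of an independent subset of `S`, so at most `α(G)`, and it vanishes when `S = ∅`.
Integrating `∑_I (-1)^(|I|-1) 1_{A_I} ≤ α(G) 1_{⋃ A}` gives the theorem.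
-/

theorem Finset.sum_powerset_neg_one_pow_card_lt_two_mul_nonpos {α : Type*} {N : Finset α}
    (hN : N.Nonempty) (r : ℕ) : ∑ J ∈ N.powerset with #J < 2 * r, (-1 : ℤ) ^ #J ≤ 0 := by
  have hsum : ∑ J ∈ N.powerset with #J < 2 * r, (-1 : ℤ) ^ #J =
      ∑ k ∈ range (2 * r), (-1) ^ k * ((#N).choose k : ℤ) := by
    rw [← sum_fiberwise_of_maps_to (g := card) fun J hJ => mem_range.2 (mem_filter.1 hJ).2]
    refine sum_congr rfl fun k hk => ?_
    have : {J ∈ {J ∈ N.powerset | #J < 2 * r} | #J = k} = N.powersetCard k := by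
      ext J
      simp only [mem_filter, mem_powerset, mem_powersetCard, mem_range] at hk ⊢
      constructor
      · exact fun h => ⟨h.1.1, h.2⟩
      · exact fun h => ⟨⟨h.1, h.2 ▸ hk⟩, h.2⟩
    rw [this, sum_congr rfl fun J hJ => by rw [(mem_powersetCard.1 hJ).2], sum_const,
      card_powersetCard, nsmul_eq_mul, mul_comm]
  obtain ⟨d, hd⟩ : ∃ d, #N = d + 1 := ⟨#N - 1, by have := hN.card_pos; omega⟩
  rcases r with _ | r
  · simp
  · rw [hsum, hd, show 2 * (r + 1) = 2 * r + 1 + 1 by ring,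
      Int.alternating_sum_range_choose_eq_choose, (odd_two_mul_add_one r).neg_one_pow]
    simp

theorem MeasureTheory.sum_mul_measureReal_le_of_indicator_le {Ω ι : Type*} [MeasurableSpace Ω]
    {μ : Measure Ω} [IsFiniteMeasure μ] {s : Finset ι} (c : ι → ℝ) {B : ι → Set Ω}
    (hB : ∀ i ∈ s, MeasurableSet (B i)) {a : ℝ} {U : Set Ω} (hU : MeasurableSet U)
    (h : ∀ ω, ∑ i ∈ s, c i * (B i).indicator 1 ω ≤ a * U.indicator 1 ω) :
    ∑ i ∈ s, c i * μ.real (B i) ≤ a * μ.real U := by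
  have hint : ∀ i ∈ s, Integrable (fun ω => c i * (B i).indicator (1 : Ω → ℝ) ω) μ :=
    fun i hi => ((integrable_const 1).indicator (hB i hi)).const_mul _
  calc ∑ i ∈ s, c i * μ.real (B i)
      = ∫ ω, ∑ i ∈ s, c i * (B i).indicator 1 ω ∂μ := by
        rw [integral_finsetSum _ hint]
        refine sum_congr rfl fun i hi => ?_
        rw [integral_const_mul, integral_indicator_one (hB i hi)]
    _ ≤ ∫ ω, a * U.indicator 1 ω ∂μ :=
        integral_mono (integrable_finsetSum _ hint)
          (((integrable_const 1).indicator hU).const_mul a) h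
    _ = a * μ.real U := by rw [integral_const_mul, integral_indicator_one hU]

namespace SimpleGraph

variable {V : Type*} {G : SimpleGraph V}

theorem cycleGraph_adj_iff_of_lt {n : ℕ} {i j : Fin n} (hij : i < j) :
    (cycleGraph n).Adj i j ↔ j.val = i.val + 1 ∨ (i.val = 0 ∧ j.val = n - 1) := by
  have hj := j.isLt
  rw [Fin.lt_def] at hij
  rw [cycleGraph_adj', Fin.sub_val_of_le hij.le, Fin.val_sub, Nat.mod_eq_of_lt (by omega)]
  omega

theorem IsChordal.false_of_cyclic_adj (hG : G.IsChordal) {n : ℕ} (hn : 4 ≤ n) {c : ℕ → V}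
    (hc : Set.InjOn c (Set.Iio n))
    (hadj : ∀ i j, i < j → j < n → (G.Adj (c i) (c j) ↔ j = i + 1 ∨ (i = 0 ∧ j = n - 1))) :
    False := by
  have hinj : Function.Injective fun i : Fin n => c i :=
    fun i j h => Fin.ext (hc i.isLt j.isLt h)
  refine hG n hn (Set.range fun i : Fin n => c i) ⟨(?_ : cycleGraph n ≃g _).symm⟩
  refine ⟨Equiv.ofInjective _ hinj, fun {i j} => ?_⟩
  simp only [comap_adj, Function.Embedding.subtype_apply, Equiv.ofInjective_apply]
  rcases lt_trichotomy i j with h | rfl | h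
  · rw [cycleGraph_adj_iff_of_lt h, hadj i j h j.isLt]
  · simp
  · rw [G.adj_comm, (cycleGraph n).adj_comm, cycleGraph_adj_iff_of_lt h, hadj j i h i.isLt]

namespace Walk

variable {u v : V}

/-- An index-based variant of `Walk.IsChordless`: vertices two or more steps apart along the
walk are never adjacent. -/
def IsShortcutFree (w : G.Walk u v) : Prop :=
  ∀ i k, i + 1 < k → k ≤ w.length → ¬G.Adj (w.getVert i) (w.getVert k)

theorem exists_shorter_of_adj_getVert (w : G.Walk u v) {i k : ℕ} (hik : i + 1 < k)
    (hk : k ≤ w.length) (h : G.Adj (w.getVert i) (w.getVert k)) :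
    ∃ w' : G.Walk u v, w'.length < w.length ∧ w'.support ⊆ w.support := by
  refine ⟨(w.take i).append (cons h (w.drop k)), ?_, fun z hz => ?_⟩
  · simp only [length_append, take_length, length_cons, drop_length]
    omega
  · rw [support_append, support_cons, List.tail_cons, support_take,
      drop_support_eq_support_drop_min, List.mem_append] at hz
    exact hz.elim (fun h => List.take_subset _ _ h) (fun h => List.drop_subset _ _ h)

theorem exists_isShortcutFree (w : G.Walk u v) :
    ∃ w' : G.Walk u v, w'.support ⊆ w.support ∧ w'.IsShortcutFree := by
  induction hn : w.length using Nat.strong_induction_on generalizing w with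
  | _ n ih =>
  by_cases hw : w.IsShortcutFree
  · exact ⟨w, List.Subset.refl _, hw⟩
  simp only [IsShortcutFree, not_forall, not_not] at hw
  obtain ⟨i, k, hik, hk, h⟩ := hw
  obtain ⟨w', hlen, hsub⟩ := w.exists_shorter_of_adj_getVert hik hk h
  obtain ⟨w'', hsub', hw''⟩ := ih _ (hn ▸ hlen) w' rfl
  exact ⟨w'', List.Subset.trans hsub' hsub, hw''⟩

namespace IsShortcutFree

variable {w : G.Walk u v} (hw : w.IsShortcutFree)
include hw

theorem adj_getVert_iff {i k : ℕ} (hik : i < k) (hk : k ≤ w.length) :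
    G.Adj (w.getVert i) (w.getVert k) ↔ k = i + 1 := by
  refine ⟨fun h => ?_, fun h => h ▸ w.adj_getVert_succ (by omega)⟩
  by_contra hne
  exact hw i k (by omega) hk h

theorem injOn_getVert (huv : u ≠ v) : Set.InjOn w.getVert (Set.Iic w.length) := by
  suffices ∀ i k, i < k → k ≤ w.length → w.getVert i ≠ w.getVert k by
    intro i hi k hk h
    by_contra hne
    rcases Nat.lt_or_gt_of_ne hne with hik | hki
    · exact this i k hik hk h
    · exact this k i hki hi h.symm
  intro i k hik hk h
  rcases hk.lt_or_eq with hk | rfl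
  · have := w.adj_getVert_succ hk
    rw [← h, hw.adj_getVert_iff (by omega) hk] at this
    omega
  · rcases Nat.eq_zero_or_pos i with rfl | hi
    · exact huv (by simpa using h)
    · have := w.adj_getVert_succ (i := i - 1) (by omega)
      rw [Nat.sub_add_cancel hi, h, hw.adj_getVert_iff (by omega) le_rfl] at this
      omega

theorem getVert_mem (huv : u ≠ v) {C : Set V} (hC : ∀ z ∈ w.support, z = u ∨ z = v ∨ z ∈ C)
    {i : ℕ} (hi : 0 < i) (hil : i < w.length) : w.getVert i ∈ C := by
  have hinj := hw.injOn_getVert huv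
  rcases hC _ (w.getVert_mem_support i) with h | h | h
  · exact absurd (hinj (Set.mem_Iic.2 hil.le) (Set.mem_Iic.2 (Nat.zero_le _))
      (h.trans w.getVert_zero.symm)) hi.ne'
  · exact absurd (hinj (Set.mem_Iic.2 hil.le) (Set.mem_Iic.2 le_rfl)
      (h.trans w.getVert_length.symm)) hil.ne
  · exact h

end IsShortcutFree

variable {x y : V}

theorem two_le_length_of_not_adj (hxy : x ≠ y) (h : ¬G.Adj x y) (w : G.Walk x y) :
    2 ≤ w.length := by
  by_contra! hw
  interval_cases hl : w.length
  · exact hxy (eq_of_length_eq_zero hl)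
  · exact h (adj_of_length_eq_one hl)

theorem IsShortcutFree.getVert_ne_and_adj_iff {wa wb : G.Walk x y} (hb : wb.IsShortcutFree)
    (hxy : x ≠ y) (hab : ∀ i k, 0 < i → i < wa.length → 0 < k → k < wb.length →
      wa.getVert i ≠ wb.getVert k ∧ ¬G.Adj (wa.getVert i) (wb.getVert k))
    {i k : ℕ} (hi : i ≤ wa.length) (hk : 0 < k) (hkl : k < wb.length) :
    wa.getVert i ≠ wb.getVert k ∧ (G.Adj (wa.getVert i) (wb.getVert k) ↔
      (i = 0 ∧ k = 1) ∨ (i = wa.length ∧ k + 1 = wb.length)) := by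
  have hinj := hb.injOn_getVert hxy
  have hpos : wa.length ≠ 0 := fun h => hxy (eq_of_length_eq_zero h)
  rcases Nat.eq_zero_or_pos i with rfl | hi0
  · rw [show wa.getVert 0 = wb.getVert 0 by simp, hb.adj_getVert_iff hk hkl.le]
    exact ⟨fun h => hk.ne (hinj (Set.mem_Iic.2 (Nat.zero_le _)) (Set.mem_Iic.2 hkl.le) h),
      by omega⟩
  rcases hi.eq_or_lt with rfl | hil
  · rw [show wa.getVert wa.length = wb.getVert wb.length by simp, G.adj_comm,
      hb.adj_getVert_iff hkl le_rfl]
    exact ⟨fun h => hkl.ne' (hinj (Set.mem_Iic.2 le_rfl) (Set.mem_Iic.2 hkl.le) h), by omega⟩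
  · exact ⟨(hab i k hi0 hil hk hkl).1, iff_of_false (hab i k hi0 hil hk hkl).2 (by omega)⟩

end Walk

theorem IsChordal.adj_of_isShortcutFree (hG : G.IsChordal) {x y : V} (hxy : x ≠ y)
    {wa wb : G.Walk x y} (ha : wa.IsShortcutFree) (hb : wb.IsShortcutFree)
    (hab : ∀ i k, 0 < i → i < wa.length → 0 < k → k < wb.length →
      wa.getVert i ≠ wb.getVert k ∧ ¬G.Adj (wa.getVert i) (wb.getVert k)) :
    G.Adj x y := by
  by_contra hnadj
  have hp := wa.two_le_length_of_not_adj hxy hnadj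
  have hq := wb.two_le_length_of_not_adj hxy hnadj
  have cross := fun {i k} => hb.getVert_ne_and_adj_iff hxy hab (i := i) (k := k)
  have hinja := ha.injOn_getVert hxy
  have hinjb := hb.injOn_getVert hxy
  -- `wa` followed by `wb` backwards is an induced cycle of length at least four
  refine hG.false_of_cyclic_adj (n := wa.length + wb.length) (by omega)
    (c := (wa.append wb.reverse).getVert) (fun i hi j hj h => ?_) (fun i j hij hj => ?_)
  all_goals simp only [Set.mem_Iio, Walk.getVert_append', Walk.getVert_reverse] at *
  · split_ifs at h with hi' hj' hj'
    · exact hinja (Set.mem_Iic.2 hi') (Set.mem_Iic.2 hj') h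
    · exact absurd h (cross hi' (by omega) (by omega)).1
    · exact absurd h.symm (cross hj' (by omega) (by omega)).1
    · have := hinjb (Set.mem_Iic.2 (by omega)) (Set.mem_Iic.2 (by omega)) h
      omega
  · split_ifs with hi' hj' hj'
    · rw [ha.adj_getVert_iff hij hj']
      omega
    · rw [(cross hi' (by omega) (by omega)).2]
      omega
    · omega
    · rw [G.adj_comm, hb.adj_getVert_iff (by omega) (by omega)]
      omega

theorem IsChordal.adj_of_walks (hG : G.IsChordal) {x y : V} (hxy : x ≠ y) {Ca Cb : Set V}
    (hC : ∀ z ∈ Ca, ∀ z' ∈ Cb, z ≠ z' ∧ ¬G.Adj z z') (wa wb : G.Walk x y)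
    (hwa : ∀ z ∈ wa.support, z = x ∨ z = y ∨ z ∈ Ca)
    (hwb : ∀ z ∈ wb.support, z = x ∨ z = y ∨ z ∈ Cb) : G.Adj x y := by
  obtain ⟨wa', hsa, ha⟩ := wa.exists_isShortcutFree
  obtain ⟨wb', hsb, hb⟩ := wb.exists_isShortcutFree
  refine hG.adj_of_isShortcutFree hxy ha hb fun i k hi hil hk hkl => hC _ ?_ _ ?_
  · exact ha.getVert_mem hxy (fun z hz => hwa z (hsa hz)) hi hil
  · exact hb.getVert_mem hxy (fun z hz => hwb z (hsb hz)) hk hkl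

def ReachableIn (G : SimpleGraph V) (R : Set V) (a b : V) : Prop :=
  ∃ w : G.Walk a b, ∀ z ∈ w.support, z ∈ R

namespace ReachableIn

variable {R : Set V} {a b c : V}

theorem refl (ha : a ∈ R) : G.ReachableIn R a a :=
  ⟨.nil, by simpa using ha⟩

theorem right_mem (h : G.ReachableIn R a b) : b ∈ R :=
  h.elim fun w hw => hw b w.end_mem_support

theorem symm (h : G.ReachableIn R a b) : G.ReachableIn R b a := by
  obtain ⟨w, hw⟩ := h
  exact ⟨w.reverse, by simpa using hw⟩

theorem trans (h : G.ReachableIn R a b) (h' : G.ReachableIn R b c) : G.ReachableIn R a c := by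
  obtain ⟨w, hw⟩ := h
  obtain ⟨w', hw'⟩ := h'
  exact ⟨w.append w', fun z hz => (w.mem_support_append_iff w' |>.1 hz).elim (hw z) (hw' z)⟩

theorem cons (hab : G.Adj a b) (ha : a ∈ R) (h : G.ReachableIn R b c) : G.ReachableIn R a c := by
  obtain ⟨w, hw⟩ := h
  exact ⟨.cons hab w, by simpa [ha] using hw⟩

theorem concat (h : G.ReachableIn R a b) (hbc : G.Adj b c) (hc : c ∈ R) :
    G.ReachableIn R a c :=
  (h.symm.cons hbc.symm hc).symm

theorem of_mem_support (w : G.Walk a b) (hw : ∀ z ∈ w.support, z ∈ R) (hc : c ∈ w.support) :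
    G.ReachableIn R a c :=
  ⟨w.takeUntil c hc, fun z hz => hw z (w.support_takeUntil_subset_support hc hz)⟩

theorem exists_walk {x y c c' : V} (hc : G.ReachableIn R a c) (hc' : G.ReachableIn R a c')
    (hx : G.Adj x c) (hy : G.Adj c' y) :
    ∃ w : G.Walk x y, ∀ z ∈ w.support, z = x ∨ z = y ∨ G.ReachableIn R a z := by
  obtain ⟨w, hw⟩ := hc.symm.trans hc'
  refine ⟨.cons hx (w.concat hy), fun z hz => ?_⟩
  simp only [Walk.support_cons, Walk.support_concat, List.mem_cons, List.mem_append] at hz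
  rcases hz with rfl | hz | rfl | hz
  · exact .inl rfl
  · exact .inr (.inr (hc.trans (of_mem_support w hw hz)))
  · exact .inr (.inl rfl)
  · simp at hz

end ReachableIn

theorem Walk.exists_adj_reachableIn {R : Set V} {a t : V} (w : G.Walk a t) (hat : a ≠ t)
    (hw : ∀ z ∈ w.support, z ≠ t → z ∈ R) : ∃ c, G.Adj c t ∧ G.ReachableIn R a c := by
  induction w with
  | nil => exact absurd rfl hat
  | @cons a b t hab w ih =>
    have ha : a ∈ R := hw a (Walk.start_mem_support _) hat
    by_cases hbt : b = t
    · subst hbt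
      exact ⟨a, hab, .refl ha⟩
    · obtain ⟨c, hct, hbc⟩ := ih hbt fun z hz => hw z (by simp [hz])
      exact ⟨c, hct, hbc.cons hab ha⟩

structure IsSeparator (G : SimpleGraph V) (S T : Finset V) (a b : V) : Prop where
  subset : T ⊆ S
  left_notMem : a ∉ T
  right_notMem : b ∉ T
  not_reachableIn : ¬G.ReachableIn (↑S \ ↑T) a b

namespace IsSeparator

variable {S T : Finset V} {a b : V}

theorem symm (h : G.IsSeparator S T a b) : G.IsSeparator S T b a :=
  ⟨h.subset, h.right_notMem, h.left_notMem, fun h' => h.not_reachableIn h'.symm⟩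

theorem sdiff_pair (hab : a ≠ b) (hnadj : ¬G.Adj a b) : G.IsSeparator S (S \ {a, b}) a b := by
  refine ⟨sdiff_subset, by simp, by simp, fun ⟨w, hw⟩ => ?_⟩
  have hlen : 0 < w.length := Nat.pos_of_ne_zero fun h => hab (w.eq_of_length_eq_zero h)
  have hsnd := hw _ (w.getVert_mem_support 1)
  simp only [coe_sdiff, coe_insert, coe_singleton, sdiff_sdiff_right_self, Set.inf_eq_inter,
    Set.mem_inter_iff, Set.mem_insert_iff, Set.mem_singleton_iff] at hsnd
  have hadj := w.adj_getVert_succ hlen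
  rw [w.getVert_zero] at hadj
  rcases hsnd.2 with h | h
  · exact G.irrefl (h ▸ hadj)
  · exact hnadj (h ▸ hadj)

theorem exists_adj_reachableIn (hT : G.IsSeparator S T a b)
    (hmin : ∀ T', G.IsSeparator S T' a b → #T ≤ #T') {t : V} (ht : t ∈ T) :
    ∃ c, G.Adj c t ∧ G.ReachableIn (↑S \ ↑T) a c := by
  obtain ⟨w, hw⟩ : G.ReachableIn (↑S \ ↑(T.erase t)) a b := by
    by_contra h
    have := hmin _ ⟨(erase_subset t T).trans hT.subset,
      fun h' => hT.left_notMem (mem_of_mem_erase h'),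
      fun h' => hT.right_notMem (mem_of_mem_erase h'), h⟩
    exact this.not_gt (card_erase_lt_of_mem ht)
  have hwT : ∀ z ∈ w.support, z ≠ t → z ∈ (↑S \ ↑T : Set V) := by
    intro z hz hzt
    have := hw z hz
    simp only [Set.mem_sdiff, mem_coe, mem_erase] at this ⊢
    tauto
  have htw : t ∈ w.support := by
    by_contra htw
    exact hT.not_reachableIn ⟨w, fun z hz => hwT z hz fun h => htw (h ▸ hz)⟩
  exact (w.takeUntil t htw).exists_adj_reachableIn (fun h => hT.left_notMem (h ▸ ht))
    fun z hz => hwT z (w.support_takeUntil_subset_support htw hz)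

theorem isClique (hG : G.IsChordal) (hT : G.IsSeparator S T a b)
    (hmin : ∀ T', G.IsSeparator S T' a b → #T ≤ #T') : G.IsClique (T : Set V) := by
  intro x hx y hy hxy
  obtain ⟨cxa, hxa, hcxa⟩ := hT.exists_adj_reachableIn hmin hx
  obtain ⟨cya, hya, hcya⟩ := hT.exists_adj_reachableIn hmin hy
  obtain ⟨cxb, hxb, hcxb⟩ := hT.symm.exists_adj_reachableIn (fun T' h => hmin T' h.symm) hx
  obtain ⟨cyb, hyb, hcyb⟩ := hT.symm.exists_adj_reachableIn (fun T' h => hmin T' h.symm) hy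
  obtain ⟨wa, hwa⟩ := hcxa.exists_walk hcya hxa.symm hya
  obtain ⟨wb, hwb⟩ := hcxb.exists_walk hcyb hxb.symm hyb
  refine hG.adj_of_walks hxy
    (fun z (hz : G.ReachableIn _ a z) z' (hz' : G.ReachableIn _ b z') => ⟨?_, ?_⟩) wa wb hwa hwb
  · rintro rfl
    exact hT.not_reachableIn (hz.trans hz'.symm)
  · intro h
    exact hT.not_reachableIn ((hz.concat h hz'.right_mem).trans hz'.symm)

end IsSeparator

def IsSimplicialIn (G : SimpleGraph V) (S : Set V) (v : V) : Prop :=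
  G.IsClique {u ∈ S | G.Adj v u}

theorem exists_reachableIn_isSimplicialIn {S T : Finset V} {c d : V}
    (hT : G.IsClique (T : Set V)) (hTS : T ⊆ S) (hc : c ∈ (↑S \ ↑T : Set V))
    (hd : d ∈ (↑S \ ↑T : Set V)) (hcd : ¬G.ReachableIn (↑S \ ↑T) c d)
    (ih : ∀ S' ⊂ S, G.IsClique (S' : Set V) ∨ ∃ v ∈ S', ∃ w ∈ S', v ≠ w ∧ ¬G.Adj v w ∧
      G.IsSimplicialIn S' v ∧ G.IsSimplicialIn S' w) :
    ∃ v, G.ReachableIn (↑S \ ↑T) c v ∧ G.IsSimplicialIn S v := by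
  -- the component of `c` together with `T`: a proper subset with the same neighbourhoods
  set Sc := S.filter (G.ReachableIn (↑S \ ↑T) c) ∪ T
  have hsimp : ∀ v, G.ReachableIn (↑S \ ↑T) c v →
      (G.IsSimplicialIn Sc v ↔ G.IsSimplicialIn S v) := by
    intro v hv
    suffices {u ∈ (Sc : Set V) | G.Adj v u} = {u ∈ (S : Set V) | G.Adj v u} by
      rw [IsSimplicialIn, IsSimplicialIn, this]
    ext u
    simp only [Sc, Set.mem_ofPred_eq, coe_union, coe_filter, Set.mem_union, mem_coe]
    refine ⟨fun ⟨hu, huv⟩ => ⟨hu.elim (·.1) (hTS ·), huv⟩, fun ⟨hu, huv⟩ => ⟨?_, huv⟩⟩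
    by_cases huT : u ∈ T
    · exact .inr huT
    · exact .inl ⟨hu, hv.concat huv ⟨hu, huT⟩⟩
  have hSc : Sc ⊂ S := by
    refine ssubset_of_subset_not_subset (union_subset (filter_subset _ _) hTS) fun h => ?_
    rcases mem_union.1 (h hd.1) with h | h
    · exact hcd (mem_filter.1 h).2
    · exact hd.2 h
  have hcSc : c ∈ Sc := mem_union_left _ (mem_filter.2 ⟨hc.1, .refl hc⟩)
  rcases ih Sc hSc with hclq | ⟨v, hv, w, hw, hvw, hnadj, hsv, hsw⟩
  · exact ⟨c, .refl hc, (hsimp c (.refl hc)).1 (hclq.subset fun u hu => hu.1)⟩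
  -- `T` is a clique, so one of the two non-adjacent simplicial vertices lies outside it
  obtain ⟨u, hu, huT, hsu⟩ : ∃ u ∈ Sc, u ∉ T ∧ G.IsSimplicialIn Sc u := by
    by_cases hvT : v ∈ T
    · exact ⟨w, hw, fun hwT => hnadj (hT hvT hwT hvw), hsw⟩
    · exact ⟨v, hv, hvT, hsv⟩
  have hcu : G.ReachableIn (↑S \ ↑T) c u :=
    (mem_filter.1 ((mem_union.1 hu).resolve_right huT)).2
  exact ⟨u, hcu, (hsimp u hcu).1 hsu⟩

theorem IsChordal.isClique_or_exists_isSimplicialIn (hG : G.IsChordal) (S : Finset V) :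
    G.IsClique (S : Set V) ∨ ∃ v ∈ S, ∃ w ∈ S, v ≠ w ∧ ¬G.Adj v w ∧
      G.IsSimplicialIn S v ∧ G.IsSimplicialIn S w := by
  induction S using Finset.strongInduction with
  | H S ih =>
  refine or_iff_not_imp_left.2 fun hS => ?_
  obtain ⟨a, ha, b, hb, hab, hnadj⟩ : ∃ a ∈ S, ∃ b ∈ S, a ≠ b ∧ ¬G.Adj a b := by
    simpa [IsClique, Set.Pairwise] using hS
  obtain ⟨T, hT, hmin⟩ := (measure (card : Finset V → ℕ)).wf.has_min
    {T | G.IsSeparator S T a b} ⟨_, IsSeparator.sdiff_pair hab hnadj⟩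
  replace hmin : ∀ T', G.IsSeparator S T' a b → #T ≤ #T' :=
    fun T' h => not_lt.1 (hmin T' h)
  have hTc := hT.isClique hG hmin
  obtain ⟨va, hva, hsa⟩ := exists_reachableIn_isSimplicialIn hTc hT.subset ⟨ha, hT.left_notMem⟩
    ⟨hb, hT.right_notMem⟩ hT.not_reachableIn ih
  obtain ⟨vb, hvb, hsb⟩ := exists_reachableIn_isSimplicialIn hTc hT.subset ⟨hb, hT.right_notMem⟩
    ⟨ha, hT.left_notMem⟩ hT.symm.not_reachableIn ih
  refine ⟨va, hva.right_mem.1, vb, hvb.right_mem.1, ?_, ?_, hsa, hsb⟩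
  · rintro rfl
    exact hT.not_reachableIn (hva.trans hvb.symm)
  · intro h
    exact hT.not_reachableIn ((hva.concat h hvb.right_mem).trans hvb.symm)

theorem IsChordal.exists_isSimplicialIn (hG : G.IsChordal) {S : Finset V} (hS : S.Nonempty) :
    ∃ v ∈ S, G.IsSimplicialIn S v := by
  rcases hG.isClique_or_exists_isSimplicialIn S with hclq | ⟨v, hv, -, -, -, -, hsv, -⟩
  · obtain ⟨v, hv⟩ := hS
    exact ⟨v, hv, hclq.subset fun _ h => h.1⟩
  · exact ⟨v, hv, hsv⟩

section Finite

variable [Fintype V]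

theorem mem_cliqueComplex {I : Finset V} :
    I ∈ G.cliqueComplex ↔ I.Nonempty ∧ G.IsClique (I : Set V) := by
  simp [cliqueComplex]

noncomputable def truncatedCliqueSum (G : SimpleGraph V) (r : ℕ) (S : Finset V) : ℤ :=
  ∑ I ∈ G.cliqueComplex with #I ≤ 2 * r ∧ I ⊆ S, (-1) ^ (#I - 1)

@[simp]
theorem truncatedCliqueSum_empty (r : ℕ) : G.truncatedCliqueSum r ∅ = 0 := by
  refine sum_eq_zero fun I hI => ?_
  simp only [mem_filter, mem_cliqueComplex, subset_empty] at hI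
  exact absurd hI.2.2 hI.1.1.ne_empty

theorem truncatedCliqueSum_eq_add {r : ℕ} {S : Finset V} {v : V} (hv : v ∈ S)
    (hsv : G.IsSimplicialIn S v) :
    G.truncatedCliqueSum r S = G.truncatedCliqueSum r (S.erase v) +
      ∑ J ∈ (S.filter (G.Adj v)).powerset with #J < 2 * r, (-1) ^ #J := by
  rw [truncatedCliqueSum, ← sum_filter_add_sum_filter_not _ (fun I => v ∉ I), filter_filter,
    filter_filter]
  congr 1
  · refine sum_congr (ext fun I => ?_) fun _ _ => rfl
    simp only [mem_filter, subset_erase]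
    tauto
  · refine sum_nbij' (·.erase v) (insert v ·) (fun I hI => ?_) (fun J hJ => ?_)
      (fun I hI => insert_erase (not_not.1 (mem_filter.1 hI).2.2))
      (fun J hJ => erase_insert fun h => G.irrefl ((mem_filter.1 (mem_powerset.1
        (mem_filter.1 hJ).1 h)).2)) (fun I hI => ?_)
    · simp only [mem_filter, mem_cliqueComplex, not_not, mem_powerset] at hI ⊢
      obtain ⟨⟨-, hIc⟩, ⟨hIr, hIS⟩, hvI⟩ := hI
      refine ⟨fun u hu => ?_, ?_⟩
      · obtain ⟨huv, huI⟩ := mem_erase.1 hu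
        exact mem_filter.2 ⟨hIS huI, hIc hvI huI huv.symm⟩
      · rw [card_erase_of_mem hvI]
        have := card_pos.2 ⟨v, hvI⟩
        omega
    · simp only [mem_filter, mem_powerset] at hJ
      obtain ⟨hJN, hJr⟩ := hJ
      have hvJ : v ∉ J := fun h => G.irrefl (mem_filter.1 (hJN h)).2
      simp only [mem_filter, mem_cliqueComplex, not_not, mem_insert_self, and_true,
        insert_nonempty, true_and, card_insert_of_notMem hvJ, coe_insert, isClique_insert]
      refine ⟨⟨hsv.subset fun u hu => ?_, fun u hu _ => (mem_filter.1 (hJN hu)).2⟩, by omega,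
        insert_subset hv fun u hu => (mem_filter.1 (hJN hu)).1⟩
      exact mem_filter.1 (hJN hu)
    · simp only [mem_filter, not_not] at hI
      rw [card_erase_of_mem hI.2.2]

theorem IsChordal.exists_isIndepSet_truncatedCliqueSum_le (hG : G.IsChordal) (r : ℕ)
    (S : Finset V) : ∃ T ⊆ S, G.IsIndepSet (T : Set V) ∧ G.truncatedCliqueSum r S ≤ #T := by
  induction S using Finset.strongInduction with
  | H S ih =>
  rcases S.eq_empty_or_nonempty with rfl | hS
  · exact ⟨∅, empty_subset _, by simp, by simp⟩
  obtain ⟨v, hv, hsv⟩ := hG.exists_isSimplicialIn hS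
  obtain ⟨T, hTS, hT, hle⟩ := ih _ (erase_ssubset hv)
  rw [truncatedCliqueSum_eq_add hv hsv]
  rcases (S.filter (G.Adj v)).eq_empty_or_nonempty with hN | hN
  · have hvT : v ∉ T := fun h => (mem_erase.1 (hTS h)).1 rfl
    refine ⟨insert v T, insert_subset hv (hTS.trans (erase_subset _ _)), ?_, ?_⟩
    · rw [coe_insert]
      refine hT.insert fun u hu _ => ?_
      have hnadj : ¬G.Adj v u := fun h =>
        (eq_empty_iff_forall_notMem.1 hN) u (mem_filter.2 ⟨mem_of_mem_erase (hTS hu), h⟩)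
      exact ⟨hnadj, fun h => hnadj h.symm⟩
    · have : ∑ J ∈ (∅ : Finset V).powerset with #J < 2 * r, (-1 : ℤ) ^ #J ≤ 1 := by
        rw [powerset_empty, filter_singleton]
        split_ifs <;> simp
      rw [hN, card_insert_of_notMem hvT]
      push_cast
      linarith
  · exact ⟨T, hTS.trans (erase_subset _ _), hT,
      by linarith [sum_powerset_neg_one_pow_card_lt_two_mul_nonpos hN r]⟩

theorem indepNumber_eq_indepNum : G.indepNumber = G.indepNum := by
  simp only [indepNumber, indepNum, isNIndepSet_iff]

theorem sum_mul_indicator_biInter_eq_truncatedCliqueSum {Ω : Type*} (A : V → Set Ω) (r : ℕ)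
    (ω : Ω) : ∑ I ∈ G.cliqueComplex with #I ≤ 2 * r, (-1 : ℝ) ^ (#I - 1) *
      (⋂ i ∈ I, A i).indicator 1 ω = G.truncatedCliqueSum r ({v | ω ∈ A v} : Finset V) := by
  have hind : ∀ I : Finset V, (⋂ i ∈ I, A i).indicator (1 : Ω → ℝ) ω =
      if I ⊆ ({v | ω ∈ A v} : Finset V) then 1 else 0 := by
    intro I
    simp [Set.indicator_apply, subset_iff]
  simp only [hind, mul_ite, mul_one, mul_zero, ← sum_filter, filter_filter, truncatedCliqueSum]
  push_cast
  rfl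

theorem IsChordal.truncatedCliqueSum_le_indepNumber (hG : G.IsChordal) (r : ℕ) (S : Finset V) :
    G.truncatedCliqueSum r S ≤ G.indepNumber := by
  obtain ⟨T, -, hT, hle⟩ := hG.exists_isIndepSet_truncatedCliqueSum_le r S
  rw [indepNumber_eq_indepNum]
  exact hle.trans (by exact_mod_cast hT.card_le_indepNum)

end Finite

end SimpleGraph

theorem chordal_graph_sieve_lower_truncated_general {Ω V : Type*} [MeasurableSpace Ω] [Fintype V]
    (μ : Measure Ω) [IsProbabilityMeasure μ]
    (G : SimpleGraph V) (hG : G.IsChordal)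
    (A : V → Set Ω) (hA : ∀ v, MeasurableSet (A v)) (r : ℕ) :
    (μ (⋃ v, A v)).toReal ≥
      (1 / G.indepNumber) *
        ∑ I ∈ G.cliqueComplex.filter (fun I => I.card ≤ 2 * r),
          (-1 : ℝ) ^ (I.card - 1) * (μ (⋂ i ∈ I, A i)).toReal := by
  have hpoint : ∀ ω, ∑ I ∈ G.cliqueComplex with #I ≤ 2 * r,
      (-1 : ℝ) ^ (#I - 1) * (⋂ i ∈ I, A i).indicator 1 ω ≤
        G.indepNumber * (⋃ v, A v).indicator 1 ω := by
    intro ω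
    rw [SimpleGraph.sum_mul_indicator_biInter_eq_truncatedCliqueSum]
    by_cases hω : ω ∈ ⋃ v, A v
    · rw [Set.indicator_of_mem hω, Pi.one_apply, mul_one]
      exact_mod_cast hG.truncatedCliqueSum_le_indepNumber r _
    · have : ({v | ω ∈ A v} : Finset V) = ∅ := by simpa using hω
      simp [this, Set.indicator_of_notMem hω]
  have hsum := sum_mul_measureReal_le_of_indicator_le (μ := μ) _
    (fun I _ => I.measurableSet_biInter fun i _ => hA i) (MeasurableSet.iUnion hA) hpoint
  rw [ge_iff_le, one_div, ← div_eq_inv_mul]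
  exact div_le_of_le_mul₀ (Nat.cast_nonneg _) measureReal_nonneg (hsum.trans_eq (mul_comm _ _))

theorem chordal_graph_sieve_lower_truncated {Ω V : Type*} [MeasurableSpace Ω] [Fintype V]
    [Nonempty V] (μ : Measure Ω) [IsProbabilityMeasure μ]
    (G : SimpleGraph V) (hG : G.IsChordal)
    (A : V → Set Ω) (hA : ∀ v, MeasurableSet (A v)) (r : ℕ) (hr : 0 < r) :
    (μ (⋃ v, A v)).toReal ≥
      (1 / G.indepNumber) *
        ∑ I ∈ G.cliqueComplex.filter (fun I => I.card ≤ 2 * r),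
          (-1 : ℝ) ^ (I.card - 1) * (μ (⋂ i ∈ I, A i)).toReal :=
  chordal_graph_sieve_lower_truncated_general μ G hG A hA r
end
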